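/- arXiv:2201.13005 — 4 statements merged into one kernel-verified Lean document; each statement's English description precedes it below -/
import Mathlib

section
/- Let P_{XY}, Q_{XY} be full-support distributions on finite X × Y and define Λ̂(x,y) = log(P_{XY}(x,y)/Q_{XY}(x,y)) − log(P_{XY}(x,0)/Q_{XY}(x,0)). Let κ: X → U be a function such that κ(x) = κ(x′) iff Λ̂(x,·) = Λ̂(x′,·), and let U = κ(X) (deterministic test channel). Then for any distribution P̃ on U × X × Y with P̃_{UX} = P_{UX} and P̃_{UY} = P_{UY}, one has D(P̃ ‖ Q_{UXY}) = D(P̃ ‖ P_{UXY}) + D(P_{UXY} ‖ Q_{UXY}). -/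
open Real

/-- The normalized log-likelihood ratio `Λ̂(x,y)` relative to a reference symbol `y0`. -/
noncomputable def Lhat {X Y : Type*} (P Q : X → Y → ℝ) (y0 : Y) (x : X) (y : Y) : ℝ :=
  Real.log (P x y / Q x y) - Real.log (P x y0 / Q x y0)

/-- KL divergence on a finite triple alphabet. -/
noncomputable def kl3 {U X Y : Type*} [Fintype U] [Fintype X] [Fintype Y]
    (P Q : U → X → Y → ℝ) : ℝ :=
  ∑ u, ∑ x, ∑ y, P u x y * Real.log (P u x y / Q u x y)

/-- Pythagorean identity for the deterministic test channel `κ` that merges symbols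
with equal `Λ̂`-rows: for any `P̃` with the same `(U,X)` and `(U,Y)` marginals as
`P_{UXY}`, `D(P̃‖Q_{UXY}) = D(P̃‖P_{UXY}) + D(P_{UXY}‖Q_{UXY})`. -/
theorem stmt2 {X Y U : Type*} [Fintype X] [Fintype Y] [Fintype U] [DecidableEq U]
    (P Q : X → Y → ℝ) (y0 : Y)
    (hPpos : ∀ x y, 0 < P x y) (hQpos : ∀ x y, 0 < Q x y)
    (hPsum : ∑ x, ∑ y, P x y = 1) (hQsum : ∑ x, ∑ y, Q x y = 1)
    (κ : X → U)
    (hκ : ∀ x x', κ x = κ x' ↔ ∀ y, Lhat P Q y0 x y = Lhat P Q y0 x' y)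
    (PU QU : U → X → Y → ℝ)
    (hPU : ∀ u x y, PU u x y = if κ x = u then P x y else 0)
    (hQU : ∀ u x y, QU u x y = if κ x = u then Q x y else 0)
    (Pt : U → X → Y → ℝ)
    (hPtnn : ∀ u x y, 0 ≤ Pt u x y)
    (hPtsum : ∑ u, ∑ x, ∑ y, Pt u x y = 1)
    (hUX : ∀ u x, ∑ y, Pt u x y = ∑ y, PU u x y)
    (hUY : ∀ u y, ∑ x, Pt u x y = ∑ x, PU u x y)
    (hac : ∀ u x y, 0 < Pt u x y → κ x = u) :
    kl3 Pt QU = kl3 Pt PU + kl3 PU QU := by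
  classical
  set c : X → ℝ := fun x => Real.log (P x y0 / Q x y0) with hc
  set g : U → Y → ℝ := fun u y =>
    if h : ∃ x, κ x = u then Lhat P Q y0 h.choose y else 0 with hgdef
  have hgk : ∀ x y, g (κ x) y = Lhat P Q y0 x y := by
    intro x y
    have h : ∃ x', κ x' = κ x := ⟨x, rfl⟩
    simp only [hgdef, dif_pos h]
    exact ((hκ h.choose x).mp h.choose_spec) y
  have hlog : ∀ x y, Real.log (P x y / Q x y) = g (κ x) y + c x := by
    intro x y
    rw [hgk]
    simp [Lhat, hc]
  have key1 : ∀ u x y, Pt u x y * Real.log (Pt u x y / QU u x y)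
      = Pt u x y * Real.log (Pt u x y / PU u x y)
        + Pt u x y * (g u y + c x) := by
    intro u x y
    rcases eq_or_lt_of_le (hPtnn u x y) with h0 | hpos
    · simp [← h0]
    · have hku : κ x = u := hac u x y hpos
      have hPU' : PU u x y = P x y := by simp [hPU, hku]
      have hQU' : QU u x y = Q x y := by simp [hQU, hku]
      have hP := hPpos x y
      have hQ := hQpos x y
      have hL : g u y + c x = Real.log (P x y / Q x y) := by
        rw [← hku, ← hlog x y]
      rw [hPU', hQU', hL,
          Real.log_div (ne_of_gt hpos) (ne_of_gt hQ),
          Real.log_div (ne_of_gt hpos) (ne_of_gt hP),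
          Real.log_div (ne_of_gt hP) (ne_of_gt hQ)]
      ring
  have key2 : ∀ u x y, PU u x y * Real.log (PU u x y / QU u x y)
      = PU u x y * (g u y + c x) := by
    intro u x y
    by_cases hku : κ x = u
    · have hPU' : PU u x y = P x y := by simp [hPU, hku]
      have hQU' : QU u x y = Q x y := by simp [hQU, hku]
      rw [hPU', hQU', ← hku, hlog x y]
    · simp [hPU, hku]
  have hsplit : ∀ (R : U → X → Y → ℝ),
      ∑ u, ∑ x, ∑ y, R u x y * (g u y + c x)
      = (∑ u, ∑ y, (∑ x, R u x y) * g u y)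
        + ∑ u, ∑ x, (∑ y, R u x y) * c x := by
    intro R
    rw [← Finset.sum_add_distrib]
    refine Finset.sum_congr rfl fun u _ => ?_
    have h1 : ∑ x, ∑ y, R u x y * (g u y + c x)
        = (∑ x, ∑ y, R u x y * g u y) + ∑ x, ∑ y, R u x y * c x := by
      rw [← Finset.sum_add_distrib]
      refine Finset.sum_congr rfl fun x _ => ?_
      rw [← Finset.sum_add_distrib]
      exact Finset.sum_congr rfl fun y _ => by ring
    rw [h1]
    congr 1
    · rw [Finset.sum_comm]
      exact Finset.sum_congr rfl fun y _ => (Finset.sum_mul _ _ _).symm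
    · exact Finset.sum_congr rfl fun x _ => (Finset.sum_mul _ _ _).symm
  have hsum : ∑ u, ∑ x, ∑ y, Pt u x y * (g u y + c x)
      = ∑ u, ∑ x, ∑ y, PU u x y * (g u y + c x) := by
    rw [hsplit Pt, hsplit PU]
    congr 1
    · exact Finset.sum_congr rfl fun u _ => Finset.sum_congr rfl fun y _ => by
        rw [hUY u y]
    · exact Finset.sum_congr rfl fun u _ => Finset.sum_congr rfl fun x _ => by
        rw [hUX u x]
  have hA : kl3 Pt QU = kl3 Pt PU + ∑ u, ∑ x, ∑ y, Pt u x y * (g u y + c x) := by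
    unfold kl3
    rw [← Finset.sum_add_distrib]
    refine Finset.sum_congr rfl fun u _ => ?_
    rw [← Finset.sum_add_distrib]
    refine Finset.sum_congr rfl fun x _ => ?_
    rw [← Finset.sum_add_distrib]
    exact Finset.sum_congr rfl fun y _ => key1 u x y
  have hB : kl3 PU QU = ∑ u, ∑ x, ∑ y, PU u x y * (g u y + c x) := by
    unfold kl3
    exact Finset.sum_congr rfl fun u _ => Finset.sum_congr rfl fun x _ =>
      Finset.sum_congr rfl fun y _ => key2 u x y
  rw [hA, hsum, ← hB]
end

section
/- With the setup of the previous statement (κ merging symbols with equal Λ̂-rows), the minimum of D(P̃ ‖ Q_{UXY}) over all P̃ with P̃_{UX} = P_{UX} and P̃_{UY} = P_{UY} equals D(P_{XY} ‖ Q_{XY}), attained at P̃ = P_{UXY}. -/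
open Real

/-- KL divergence on a finite product alphabet. -/
noncomputable def kl2 {X Y : Type*} [Fintype X] [Fintype Y] (P Q : X → Y → ℝ) : ℝ :=
  ∑ x, ∑ y, P x y * Real.log (P x y / Q x y)

/-- Gibbs pointwise inequality. -/
lemma gibbs_pt (a b : ℝ) (ha : 0 ≤ a) (hb : 0 < b) :
    a - b ≤ a * Real.log (a / b) := by
  rcases eq_or_lt_of_le ha with h | h
  · simp [← h]; linarith
  · have h1 : Real.log (b / a) ≤ b / a - 1 := Real.log_le_sub_one_of_pos (by positivity)
    have h2 : Real.log (b / a) = - Real.log (a / b) := by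
      rw [← Real.log_inv]; congr 1; rw [inv_div]
    have h3 : 1 - b / a ≤ Real.log (a / b) := by linarith [h1, h2.symm.le]
    have h4 : a * (1 - b / a) ≤ a * Real.log (a / b) :=
      mul_le_mul_of_nonneg_left h3 ha
    have h5 : a * (1 - b / a) = a - b := by field_simp
    linarith

/-- For the merging channel `κ`, the minimum of `D(P̃‖Q_{UXY})` over all `P̃` with
`P̃_{UX} = P_{UX}`, `P̃_{UY} = P_{UY}` equals `D(P_{XY}‖Q_{XY})`, attained at `P_{UXY}`. -/
theorem stmt3 {X Y U : Type*} [Fintype X] [Fintype Y] [Fintype U] [DecidableEq U]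
    (P Q : X → Y → ℝ) (y0 : Y)
    (hPpos : ∀ x y, 0 < P x y) (hQpos : ∀ x y, 0 < Q x y)
    (hPsum : ∑ x, ∑ y, P x y = 1) (hQsum : ∑ x, ∑ y, Q x y = 1)
    (κ : X → U)
    (hκ : ∀ x x', κ x = κ x' ↔ ∀ y, Lhat P Q y0 x y = Lhat P Q y0 x' y)
    (PU QU : U → X → Y → ℝ)
    (hPU : ∀ u x y, PU u x y = if κ x = u then P x y else 0)
    (hQU : ∀ u x y, QU u x y = if κ x = u then Q x y else 0) :
    IsLeast {d : ℝ | ∃ Pt : U → X → Y → ℝ,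
        (∀ u x y, 0 ≤ Pt u x y) ∧ (∑ u, ∑ x, ∑ y, Pt u x y = 1) ∧
        (∀ u x, ∑ y, Pt u x y = ∑ y, PU u x y) ∧
        (∀ u y, ∑ x, Pt u x y = ∑ x, PU u x y) ∧
        d = kl3 Pt QU}
      (kl2 P Q) ∧ kl3 PU QU = kl2 P Q := by
  classical
  -- key identity kl3 PU QU = kl2 P Q
  have key : kl3 PU QU = kl2 P Q := by
    unfold kl3 kl2
    rw [Finset.sum_comm]
    refine Finset.sum_congr rfl fun x _ => ?_
    rw [Finset.sum_comm]
    refine Finset.sum_congr rfl fun y _ => ?_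
    have h : ∀ u, PU u x y * Real.log (PU u x y / QU u x y)
        = if κ x = u then P x y * Real.log (P x y / Q x y) else 0 := by
      intro u
      rw [hPU, hQU]
      by_cases h : κ x = u <;> simp [h]
    simp only [h]
    simp
  -- total mass of PU
  have hPUsum : ∑ u, ∑ x, ∑ y, PU u x y = 1 := by
    rw [Finset.sum_comm]
    have h : ∀ x, ∑ u, ∑ y, PU u x y = ∑ y, P x y := by
      intro x
      rw [Finset.sum_comm]
      refine Finset.sum_congr rfl fun y _ => ?_
      simp [hPU]
    rw [Finset.sum_congr rfl fun x _ => h x, hPsum]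
  -- function ℓ depending only on (u, y)
  obtain ⟨ℓ, hℓ⟩ : ∃ ℓ : U → Y → ℝ, ∀ x y, ℓ (κ x) y = Lhat P Q y0 x y := by
    refine ⟨fun u y => if h : ∃ x, κ x = u then Lhat P Q y0 h.choose y else 0,
      fun x y => ?_⟩
    have h : ∃ x', κ x' = κ x := ⟨x, rfl⟩
    simp only [dif_pos h]
    exact (hκ h.choose x).mp h.choose_spec y
  set c : X → ℝ := fun x => Real.log (P x y0 / Q x y0) with hc
  have hlc : ∀ x y, ℓ (κ x) y + c x = Real.log (P x y / Q x y) := by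
    intro x y
    rw [hℓ x y]
    simp only [Lhat, hc]
    ring
  -- splitting lemma for sums of R * (ℓ + c)
  have hsplit : ∀ R : U → X → Y → ℝ,
      (∑ u, ∑ x, ∑ y, R u x y * (ℓ u y + c x))
      = (∑ u, ∑ y, ℓ u y * ∑ x, R u x y) + ∑ u, ∑ x, c x * ∑ y, R u x y := by
    intro R
    simp only [mul_add, Finset.sum_add_distrib]
    congr 1
    · refine Finset.sum_congr rfl fun u _ => ?_
      rw [Finset.sum_comm]
      refine Finset.sum_congr rfl fun y _ => ?_
      rw [Finset.mul_sum]
      exact Finset.sum_congr rfl fun x _ => mul_comm _ _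
    · refine Finset.sum_congr rfl fun u _ => Finset.sum_congr rfl fun x _ => ?_
      rw [Finset.mul_sum]
      exact Finset.sum_congr rfl fun y _ => mul_comm _ _
  -- value of ∑ PU * (ℓ + c)
  have hPUlc : (∑ u, ∑ x, ∑ y, PU u x y * (ℓ u y + c x)) = kl2 P Q := by
    rw [← key]
    unfold kl3
    refine Finset.sum_congr rfl fun u _ => Finset.sum_congr rfl fun x _ =>
      Finset.sum_congr rfl fun y _ => ?_
    rw [hPU, hQU]
    by_cases h : κ x = u
    · simp only [if_pos h]
      rw [← h, hlc]
    · simp [h]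
  refine ⟨⟨⟨PU, ?_, hPUsum, fun u x => rfl, fun u y => rfl, key.symm⟩, ?_⟩, key⟩
  · intro u x y
    rw [hPU]
    split_ifs with h
    · exact (hPpos x y).le
    · exact le_refl 0
  · -- lower bound
    rintro d ⟨Pt, hnn, hsum1, hrow, hcol, hd⟩
    -- support of Pt
    have hsupp : ∀ u x y, κ x ≠ u → Pt u x y = 0 := by
      intro u x y h
      have h0 : ∑ y, Pt u x y = 0 := by
        rw [hrow u x]
        refine Finset.sum_eq_zero fun y _ => ?_
        rw [hPU, if_neg h]
      exact (Finset.sum_eq_zero_iff_of_nonneg (fun y _ => hnn u x y)).mp h0 y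
        (Finset.mem_univ y)
    -- pointwise decomposition
    have hid1 : ∀ u x y, Pt u x y * Real.log (Pt u x y / QU u x y)
        = Pt u x y * Real.log (Pt u x y / PU u x y) + Pt u x y * (ℓ u y + c x) := by
      intro u x y
      by_cases hz : Pt u x y = 0
      · simp [hz]
      · have hk : κ x = u := by
          by_contra hk; exact hz (hsupp u x y hk)
        have hpt : 0 < Pt u x y := lt_of_le_of_ne (hnn u x y) (Ne.symm hz)
        subst hk
        rw [hPU, hQU, if_pos rfl, if_pos rfl, hlc x y,
          Real.log_div hpt.ne' (hQpos x y).ne',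
          Real.log_div hpt.ne' (hPpos x y).ne',
          Real.log_div (hPpos x y).ne' (hQpos x y).ne']
        ring
    -- B = kl2 P Q
    have hB : (∑ u, ∑ x, ∑ y, Pt u x y * (ℓ u y + c x)) = kl2 P Q := by
      rw [hsplit Pt, ← hPUlc, hsplit PU]
      congr 1
      · exact Finset.sum_congr rfl fun u _ => Finset.sum_congr rfl fun y _ => by
          rw [hcol u y]
      · exact Finset.sum_congr rfl fun u _ => Finset.sum_congr rfl fun x _ => by
          rw [hrow u x]
    -- A ≥ 0
    have hA : 0 ≤ ∑ u, ∑ x, ∑ y, Pt u x y * Real.log (Pt u x y / PU u x y) := by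
      have hpt : ∀ u x y, Pt u x y - PU u x y
          ≤ Pt u x y * Real.log (Pt u x y / PU u x y) := by
        intro u x y
        by_cases hk : κ x = u
        · rw [hPU, if_pos hk]
          exact gibbs_pt _ _ (hnn u x y) (hPpos x y)
        · rw [hPU, if_neg hk, hsupp u x y hk]
          simp
      have hle : (∑ u, ∑ x, ∑ y, (Pt u x y - PU u x y))
          ≤ ∑ u, ∑ x, ∑ y, Pt u x y * Real.log (Pt u x y / PU u x y) :=
        Finset.sum_le_sum fun u _ => Finset.sum_le_sum fun x _ =>
          Finset.sum_le_sum fun y _ => hpt u x y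
      have hzero : (∑ u, ∑ x, ∑ y, (Pt u x y - PU u x y)) = 0 := by
        simp only [Finset.sum_sub_distrib]
        rw [hsum1, hPUsum]
        ring
      linarith
    -- conclude
    have hdval : d = (∑ u, ∑ x, ∑ y, Pt u x y * Real.log (Pt u x y / PU u x y))
        + ∑ u, ∑ x, ∑ y, Pt u x y * (ℓ u y + c x) := by
      rw [hd]
      unfold kl3
      rw [← Finset.sum_add_distrib]
      refine Finset.sum_congr rfl fun u _ => ?_
      rw [← Finset.sum_add_distrib]
      refine Finset.sum_congr rfl fun x _ => ?_
      rw [← Finset.sum_add_distrib]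
      exact Finset.sum_congr rfl fun y _ => hid1 u x y
    rw [hdval, hB]
    linarith
end

section
/- For the binary symmetric double sources with parameters p, q ∈ (0,1/2), p ≠ q, the SHA binning exponent E_b(R) = min[ min_{P̃: P̃_X = P_X, P̃_Y = P_Y, H(X̃|Ỹ) ≥ H(X|Y)} D(P̃ ‖ Q_{XY}) + |R − H(X|Y)|⁺ , D(P_{XY}‖Q_{XY}) ] satisfies: for R ≥ h(p), E_b(R) = min[ |R − h(p)|⁺, D(p‖q) ] if h(p) ≤ h(q), and E_b(R) = D(p‖q) if h(p) > h(q). -/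
open Real

/-- Binary symmetric double source with crossover probability `r`. -/
noncomputable def bsds (r : ℝ) : Fin 2 → Fin 2 → ℝ :=
  fun x y => if x = y then (1 - r) / 2 else r / 2

/-- Binary KL divergence. -/
noncomputable def klB (p q : ℝ) : ℝ :=
  p * Real.log (p / q) + (1 - p) * Real.log ((1 - p) / (1 - q))

/-- Binary entropy. -/
noncomputable def hbin (p : ℝ) : ℝ := -(p * Real.log p + (1 - p) * Real.log (1 - p))

/-- Conditional entropy `H(X̃|Ỹ)` of a joint distribution. -/
noncomputable def condEnt {X Y : Type*} [Fintype X] [Fintype Y] (P : X → Y → ℝ) : ℝ :=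
  ∑ x, ∑ y, P x y * Real.log ((∑ x', P x' y) / P x y)

/-- The inner minimization of the SHA binning bound for the BSDS:
minimum of `D(P̃‖Q_{XY})` over `P̃` with marginals `P_X`, `P_Y` (uniform) and
`H(X̃|Ỹ) ≥ H(X|Y) = h(p)`. -/
noncomputable def innerMin (p q : ℝ) : ℝ :=
  sInf {d : ℝ | ∃ Pt : Fin 2 → Fin 2 → ℝ,
    (∀ x y, 0 ≤ Pt x y) ∧
    (∀ x, ∑ y, Pt x y = 1 / 2) ∧
    (∀ y, ∑ x, Pt x y = 1 / 2) ∧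
    condEnt Pt ≥ hbin p ∧
    d = kl2 Pt (bsds q)}

/-- The SHA binning exponent for the BSDS. -/
noncomputable def Eb (p q R : ℝ) : ℝ :=
  min (innerMin p q + max (R - hbin p) 0) (klB p q)

/-!
A joint distribution on `Fin 2 × Fin 2` with uniform marginals is `bsds r` for some `r ∈ [0, 1]`,
and then `H(X̃|Ỹ) = h(r)` and `D(P̃‖Q_{XY}) = D(r‖q)`: the inner minimum is that of `D(r‖q)` over
`h(r) ≥ h(p)`. If `h(p) ≤ h(q)`, then `r = q` is feasible and the inner minimum is `0`. Otherwise
`q < p`, feasibility forces `r ≥ p`, and `D(·‖q)` increases on `[q, 1]`, so the inner term is at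
least `D(p‖q)` and the outer minimum is `D(p‖q)`.
-/

open Set InformationTheory

lemma hbin_eq_binEntropy (p : ℝ) : hbin p = binEntropy p := by
  simp only [hbin, binEntropy, log_inv]
  ring

lemma hbin_le_hbin_iff {a b : ℝ} (ha : a ∈ Icc 0 (1 / 2)) (hb : b ∈ Icc 0 (1 / 2)) :
    hbin a ≤ hbin b ↔ a ≤ b := by
  rw [one_div] at ha hb
  simp only [hbin_eq_binEntropy, binEntropy_strictMonoOn.le_iff_le ha hb]

lemma klB_eq_klFun (r : ℝ) {s : ℝ} (hs0 : s ≠ 0) (hs1 : s ≠ 1) :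
    klB r s = s * klFun (r / s) + (1 - s) * klFun ((1 - r) / (1 - s)) := by
  have hs1' : 1 - s ≠ 0 := sub_ne_zero.2 (Ne.symm hs1)
  simp only [klB, klFun_apply]
  field_simp
  ring

lemma klB_nonneg {r s : ℝ} (hr : r ∈ Icc 0 1) (hs : s ∈ Ioo 0 1) : 0 ≤ klB r s := by
  obtain ⟨hr0, hr1⟩ := hr
  obtain ⟨hs0, hs1⟩ := hs
  rw [klB_eq_klFun r hs0.ne' hs1.ne]
  have h₁ := klFun_nonneg (div_nonneg hr0 hs0.le)
  have h₂ := klFun_nonneg (div_nonneg (sub_nonneg.2 hr1) (sub_pos.2 hs1).le)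
  nlinarith

lemma klB_self {s : ℝ} (hs0 : s ≠ 0) (hs1 : s ≠ 1) : klB s s = 0 := by
  simp [klB, div_self hs0, div_self (sub_ne_zero.2 (Ne.symm hs1))]

lemma mul_log_div_eq_add {r s t : ℝ} (hs : s ≠ 0) (ht : t ≠ 0) :
    r * log (r / s) = r * log (r / t) + r * log (t / s) := by
  rcases eq_or_ne r 0 with rfl | hr
  · simp
  rw [← mul_add, ← log_mul (div_ne_zero hr ht) (div_ne_zero ht hs), div_mul_div_cancel₀ ht]

lemma klB_eq_klB_add {r p q : ℝ} (hp : p ∈ Ioo 0 1) (hq : q ∈ Ioo 0 1) :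
    klB r q = klB r p + (r * log (p / q) + (1 - r) * log ((1 - p) / (1 - q))) := by
  have h₁ := mul_log_div_eq_add (r := r) hq.1.ne' hp.1.ne'
  have h₂ := mul_log_div_eq_add (r := 1 - r) (sub_pos.2 hq.2).ne' (sub_pos.2 hp.2).ne'
  simp only [klB]
  linarith

lemma klB_le_klB_of_le {p q r : ℝ} (hq0 : 0 < q) (hqp : q < p) (hp1 : p < 1)
    (hpr : p ≤ r) (hr1 : r ≤ 1) : klB p q ≤ klB r q := by
  have hp : p ∈ Ioo 0 1 := ⟨hq0.trans hqp, hp1⟩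
  have hq : q ∈ Ioo 0 1 := ⟨hq0, hqp.trans hp1⟩
  have hself : klB p q = p * log (p / q) + (1 - p) * log ((1 - p) / (1 - q)) := rfl
  have hrp : 0 ≤ klB r p := klB_nonneg ⟨hp.1.le.trans hpr, hr1⟩ hp
  have hlog₁ : 0 < log (p / q) := log_pos ((one_lt_div hq0).2 hqp)
  have hlog₂ : log ((1 - p) / (1 - q)) < 0 :=
    log_neg (div_pos (sub_pos.2 hp1) (sub_pos.2 hq.2))
      ((div_lt_one (sub_pos.2 hq.2)).2 (by linarith))
  -- `klB r q - klB p q = klB r p + (r - p) * (log (p / q) - log ((1 - p) / (1 - q)))`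
  rw [klB_eq_klB_add (r := r) hp hq]
  nlinarith [mul_nonneg (sub_nonneg.2 hpr) (sub_nonneg.2 (hlog₂.trans hlog₁).le)]

lemma klB_le_klB_of_hbin_le {p q r : ℝ} (hq0 : 0 < q) (hqp : q < p) (hp2 : p ≤ 1 / 2)
    (hr : r ∈ Icc 0 1) (hpr : hbin p ≤ hbin r) : klB p q ≤ klB r q := by
  refine klB_le_klB_of_le hq0 hqp (by linarith) ?_ hr.2
  rcases le_or_gt r (1 / 2) with hr2 | hr2
  · exact (hbin_le_hbin_iff ⟨(hq0.trans hqp).le, hp2⟩ ⟨hr.1, hr2⟩).1 hpr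
  · linarith

lemma condEnt_bsds (r : ℝ) : condEnt (bsds r) = hbin r := by
  have hcol : (1 - r) / 2 + r / 2 = 1 / 2 := by ring
  simp only [condEnt, bsds, Fin.sum_univ_two, Fin.isValue, if_true, Fin.zero_eq_one_iff,
    Fin.one_eq_zero_iff, OfNat.ofNat_ne_one, if_false, add_comm (r / 2), hcol,
    div_div_div_cancel_right₀ (two_ne_zero' ℝ)]
  simp only [one_div, log_inv, hbin]
  ring

lemma kl2_bsds (r s : ℝ) : kl2 (bsds r) (bsds s) = klB r s := by
  simp only [kl2, bsds, Fin.sum_univ_two, Fin.isValue, if_true, Fin.zero_eq_one_iff,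
    Fin.one_eq_zero_iff, OfNat.ofNat_ne_one, if_false,
    div_div_div_cancel_right₀ (two_ne_zero' ℝ), klB]
  ring

lemma exists_eq_bsds_of_marginals {P : Fin 2 → Fin 2 → ℝ} (hnn : ∀ x y, 0 ≤ P x y)
    (hrow : ∀ x, ∑ y, P x y = 1 / 2) (hcol : ∀ y, ∑ x, P x y = 1 / 2) :
    ∃ r ∈ Icc (0 : ℝ) 1, P = bsds r := by
  have h₁ := hrow 0
  have h₂ := hrow 1
  have h₃ := hcol 0
  simp only [Fin.sum_univ_two] at h₁ h₂ h₃
  refine ⟨2 * P 0 1, ⟨by linarith [hnn 0 1], by linarith [hnn 0 0]⟩, ?_⟩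
  funext x y
  fin_cases x <;> fin_cases y <;> simp [bsds] <;> linarith

lemma bsds_marginals {r : ℝ} (hr : r ∈ Icc (0 : ℝ) 1) :
    (∀ x y, 0 ≤ bsds r x y) ∧ (∀ x, ∑ y, bsds r x y = 1 / 2) ∧ (∀ y, ∑ x, bsds r x y = 1 / 2) := by
  refine ⟨fun x y => ?_, fun x => ?_, fun y => ?_⟩
  · unfold bsds
    split_ifs <;> linarith [hr.1, hr.2]
  · fin_cases x <;> simp [Fin.sum_univ_two, bsds] <;> ring
  · fin_cases y <;> simp [Fin.sum_univ_two, bsds] <;> ring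

lemma innerMin_eq_sInf_image (p q : ℝ) :
    innerMin p q = sInf ((klB · q) '' {r | r ∈ Icc 0 1 ∧ hbin p ≤ hbin r}) := by
  unfold innerMin
  congr 1
  ext d
  constructor
  · rintro ⟨P, hnn, hrow, hcol, hent, rfl⟩
    obtain ⟨r, hr, rfl⟩ := exists_eq_bsds_of_marginals hnn hrow hcol
    exact ⟨r, ⟨hr, by rwa [condEnt_bsds] at hent⟩, (kl2_bsds r q).symm⟩
  · rintro ⟨r, ⟨hr, hent⟩, rfl⟩
    obtain ⟨hnn, hrow, hcol⟩ := bsds_marginals hr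
    exact ⟨bsds r, hnn, hrow, hcol, by rwa [condEnt_bsds], (kl2_bsds r q).symm⟩

theorem stmt6_general (p q : ℝ) (hp : 0 < p ∧ p < 1 / 2) (hq : 0 < q ∧ q < 1 / 2)
    (R : ℝ) :
    Eb p q R = if hbin p ≤ hbin q then min (max (R - hbin p) 0) (klB p q) else klB p q := by
  obtain ⟨hp0, hp2⟩ := hp
  obtain ⟨hq0, hq2⟩ := hq
  have hq : q ∈ Ioo 0 1 := ⟨hq0, by linarith⟩
  rw [Eb, innerMin_eq_sInf_image]
  split_ifs with hpq
  · have hmin : IsLeast ((klB · q) '' {r | r ∈ Icc 0 1 ∧ hbin p ≤ hbin r}) 0 :=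
      ⟨⟨q, ⟨⟨hq0.le, hq.2.le⟩, hpq⟩, klB_self hq0.ne' hq.2.ne⟩,
        by rintro _ ⟨r, ⟨hr, -⟩, rfl⟩; exact klB_nonneg hr hq⟩
    rw [hmin.csInf_eq, zero_add]
  · have hqp : q < p := by
      by_contra! hpq'
      exact hpq ((hbin_le_hbin_iff ⟨hp0.le, hp2.le⟩ ⟨hq0.le, hq2.le⟩).2 hpq')
    have hlow : klB p q ≤ sInf ((klB · q) '' {r | r ∈ Icc 0 1 ∧ hbin p ≤ hbin r}) :=
      le_csInf ⟨_, p, ⟨⟨hp0.le, by linarith⟩, le_rfl⟩, rfl⟩ <| by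
        rintro _ ⟨r, ⟨hr, hpr⟩, rfl⟩
        exact klB_le_klB_of_hbin_le hq0 hqp hp2.le hr hpr
    exact min_eq_right (by linarith [le_max_right (R - hbin p) 0])

/-- For `R ≥ h(p)`, `E_b(R) = min[|R − h(p)|⁺, D(p‖q)]` if `h(p) ≤ h(q)` and
`E_b(R) = D(p‖q)` if `h(p) > h(q)`. -/
theorem stmt6 (p q : ℝ) (hp : 0 < p ∧ p < 1 / 2) (hq : 0 < q ∧ q < 1 / 2) (hpq : p ≠ q)
    (R : ℝ) (hR : R ≥ hbin p) :
    Eb p q R = if hbin p ≤ hbin q then min (max (R - hbin p) 0) (klB p q) else klB p q :=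
  stmt6_general p q hp hq R
end

section
/- Let P and Q be full-support distributions on a finite set A, and let L ⊆ P(A) be a linear (affine) family of distributions defined by finitely many linear constraints, with P ∈ L. If D(P‖Q) = min_{P̃ ∈ L} D(P̃‖Q), then for every P̃ ∈ L, D(P̃‖Q) = D(P̃‖P) + D(P‖Q). -/
/-!
Moving from the minimizer `P` towards any `R ∈ L` along the line `P + t (R - P)` stays in `L`
for all small `t` of either sign, because `P` has full support and the constraints are affine.
So `t ↦ D(P + t (R - P)‖Q)` has a local minimum at `0`; since `R - P` has total mass zero, its
vanishing derivative says `∑ₐ (R a - P a) log (P a / Q a) = 0`, and that sum is exactly the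
defect `D(R‖Q) - D(R‖P) - D(P‖Q)`.
-/

open Real Filter Topology

/-- KL divergence between two distributions on a finite alphabet. -/
noncomputable def kl {A : Type*} [Fintype A] (P Q : A → ℝ) : ℝ :=
  ∑ a, P a * Real.log (P a / Q a)

section

variable {A ι : Type*} [Fintype A]

def linearFamily (c : ι → A → ℝ) (b : ι → ℝ) : Set (A → ℝ) :=
  {R | (∀ a, 0 ≤ R a) ∧ (∑ a, R a = 1) ∧ ∀ i, ∑ a, R a * c i a = b i}

lemma mul_log_div_eq (x : ℝ) {y : ℝ} (hy : y ≠ 0) :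
    x * log (x / y) = x * log x - x * log y := by
  rcases eq_or_ne x 0 with rfl | hx
  · simp
  · rw [log_div hx hy, mul_sub]

lemma hasDerivAt_mul_log_div {x q : ℝ} (hx : x ≠ 0) (hq : q ≠ 0) :
    HasDerivAt (fun y => y * log (y / q)) (log (x / q) + 1) x := by
  have hfun : (fun y => y * log (y / q)) = fun y => y * log y - y * log q :=
    funext fun y => mul_log_div_eq y hq
  rw [hfun, log_div hx hq, sub_add_eq_add_sub]
  exact (hasDerivAt_mul_log hx).fun_sub (hasDerivAt_mul_const _)

lemma hasDerivAt_kl_line {P Q : A → ℝ} (d : A → ℝ) (hP : ∀ a, P a ≠ 0) (hQ : ∀ a, Q a ≠ 0) :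
    HasDerivAt (fun t : ℝ => kl (fun a => P a + t * d a) Q)
      (∑ a, d a * (log (P a / Q a) + 1)) 0 := by
  unfold kl
  refine HasDerivAt.fun_sum fun a _ => ?_
  have hline : HasDerivAt (fun t : ℝ => P a + t * d a) (d a) 0 :=
    (hasDerivAt_mul_const (d a)).const_add (P a)
  have := (hasDerivAt_mul_log_div (x := P a + 0 * d a) (by simpa using hP a) (hQ a)).comp 0 hline
  simpa [Function.comp_def, mul_comm (d a)] using this

lemma sum_mul_log_div_add_one_eq_zero_of_isLocalMin {P Q d : A → ℝ} (hP : ∀ a, P a ≠ 0)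
    (hQ : ∀ a, Q a ≠ 0) (hmin : IsLocalMin (fun t : ℝ => kl (fun a => P a + t * d a) Q) 0) :
    ∑ a, d a * (log (P a / Q a) + 1) = 0 :=
  hmin.hasDerivAt_eq_zero (hasDerivAt_kl_line d hP hQ)

lemma sum_line_mul (P R f : A → ℝ) (t : ℝ) :
    ∑ a, (P a + t * (R a - P a)) * f a = (1 - t) * ∑ a, P a * f a + t * ∑ a, R a * f a := by
  simp only [Finset.mul_sum, ← Finset.sum_add_distrib]
  exact Finset.sum_congr rfl fun a _ => by ring

lemma eventually_line_mem_linearFamily {c : ι → A → ℝ} {b : ι → ℝ} {P R : A → ℝ}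
    (hP : ∀ a, 0 < P a) (hPL : P ∈ linearFamily c b) (hR : R ∈ linearFamily c b) :
    ∀ᶠ t in 𝓝 (0 : ℝ), (fun a => P a + t * (R a - P a)) ∈ linearFamily c b := by
  obtain ⟨-, hPsum, hPc⟩ := hPL
  obtain ⟨-, hRsum, hRc⟩ := hR
  have hpos : ∀ᶠ t in 𝓝 (0 : ℝ), ∀ a, 0 < P a + t * (R a - P a) := by
    refine eventually_all.2 fun a => ?_
    have hcont : Continuous fun t : ℝ => P a + t * (R a - P a) := by fun_prop
    exact hcont.continuousAt.eventually (eventually_gt_nhds (by simpa using hP a))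
  refine hpos.mono fun t ht => ⟨fun a => (ht a).le, ?_, fun i => ?_⟩
  · simpa [hPsum, hRsum] using sum_line_mul P R (fun _ => 1) t
  · rw [sum_line_mul, hPc i, hRc i]; ring

lemma kl_sub_kl_sub_kl (R : A → ℝ) {P Q : A → ℝ} (hP : ∀ a, P a ≠ 0) (hQ : ∀ a, Q a ≠ 0) :
    kl R Q - kl R P - kl P Q = ∑ a, (R a - P a) * log (P a / Q a) := by
  simp only [kl, ← Finset.sum_sub_distrib]
  refine Finset.sum_congr rfl fun a _ => ?_
  rw [mul_log_div_eq (R a) (hQ a), mul_log_div_eq (R a) (hP a), mul_log_div_eq (P a) (hQ a),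
    log_div (hP a) (hQ a)]
  ring

end

theorem stmt14_general {A ι : Type*} [Fintype A] [Fintype ι]
    (P Q : A → ℝ) (c : ι → A → ℝ) (b : ι → ℝ)
    (L : Set (A → ℝ))
    (hL : L = {R : A → ℝ | (∀ a, 0 ≤ R a) ∧ (∑ a, R a = 1) ∧
        ∀ i, ∑ a, R a * c i a = b i})
    (hPpos : ∀ a, 0 < P a) (hQpos : ∀ a, 0 < Q a)
    (hPL : P ∈ L)
    (hmin : ∀ R ∈ L, kl P Q ≤ kl R Q) :
    ∀ R ∈ L, kl R Q = kl R P + kl P Q := by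
  subst hL
  intro R hR
  have hP : ∀ a, P a ≠ 0 := fun a => (hPpos a).ne'
  have hQ : ∀ a, Q a ≠ 0 := fun a => (hQpos a).ne'
  have hlocal : IsLocalMin (fun t : ℝ => kl (fun a => P a + t * (R a - P a)) Q) 0 := by
    refine (eventually_line_mem_linearFamily hPpos hPL hR).mono fun t ht => ?_
    simpa using hmin _ ht
  have hstat := sum_mul_log_div_add_one_eq_zero_of_isLocalMin hP hQ hlocal
  have hmass : ∑ a, (R a - P a) = 0 := by
    rw [Finset.sum_sub_distrib, hR.2.1, hPL.2.1, sub_self]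
  simp only [mul_add, mul_one, Finset.sum_add_distrib, hmass, add_zero] at hstat
  linarith [kl_sub_kl_sub_kl R hP hQ]

/-- Pythagorean identity for I-projections onto a linear family: if `P ∈ L` minimizes
`D(·‖Q)` over the linear family `L`, then `D(P̃‖Q) = D(P̃‖P) + D(P‖Q)` for all `P̃ ∈ L`. -/
theorem stmt14 {A ι : Type*} [Fintype A] [Fintype ι]
    (P Q : A → ℝ) (c : ι → A → ℝ) (b : ι → ℝ)
    (L : Set (A → ℝ))
    (hL : L = {R : A → ℝ | (∀ a, 0 ≤ R a) ∧ (∑ a, R a = 1) ∧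
        ∀ i, ∑ a, R a * c i a = b i})
    (hPpos : ∀ a, 0 < P a) (hQpos : ∀ a, 0 < Q a)
    (hPsum : ∑ a, P a = 1) (hQsum : ∑ a, Q a = 1)
    (hPL : P ∈ L)
    (hmin : ∀ R ∈ L, kl P Q ≤ kl R Q) :
    ∀ R ∈ L, kl R Q = kl R P + kl P Q :=
  stmt14_general P Q c b L hL hPpos hQpos hPL hmin
end
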